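/- arXiv:1204.5011 — 2 statements merged into one kernel-verified Lean document; each statement's English description precedes it below -/
import Mathlib

section
/- Let n be an odd integer with binary expansion n = 2^{e_1} + 2^{e_2} + ⋯ + 2^{e_N} + 1, where N ≥ 2 and e_1 > e_2 > ⋯ > e_N > 0. If e_1 − e_2 = 1, then the length of the sequence of lower halves of n is l(n) = e_1 − 1 and its tail is t(n) = 3. -/
/-- The lower half of a positive integer: `lh m = ⌊m/2⌋`. -/
def lh (m : ℕ) : ℕ := m / 2

/-- The length of the sequence of lower halves of `n`: the least positive `i`
such that the `i`-th iterate of `lh` at `n` lies in `{2, 3, 4}`. -/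
noncomputable def lhLen (n : ℕ) : ℕ :=
  sInf {i : ℕ | 0 < i ∧ lh^[i] n ∈ ({2, 3, 4} : Set ℕ)}

/-- The tail of the sequence of lower halves of `n`: its last term. -/
noncomputable def lhTail (n : ℕ) : ℕ := lh^[lhLen n] n

/-! Write `n = 3 · 2^{e₂} + r` with `r = 2^{e₃} + ⋯ + 2^{e_N} + 1`. The exponents of `r` are
distinct and lie in `[0, e₂)`, so `r < 2^{e₂}`. Hence `⌊n / 2^i⌋ ≥ 3 · 2^{e₂ - i} ≥ 6` for
`i < e₂`, while `⌊n / 2^{e₂}⌋ = 3`: the sequence of lower halves first enters `{2, 3, 4}` at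
step `e₂ = e₁ - 1`, at the value `3`. -/

lemma iterate_lh (n i : ℕ) : lh^[i] n = n / 2 ^ i := by
  induction i with
  | zero => simp
  | succ k ih =>
    rw [Function.iterate_succ_apply', ih, lh, Nat.div_div_eq_div_mul, pow_succ]

lemma lhLen_eq_of_forall_lt {n k : ℕ} (hk : 0 < k) (hmem : lh^[k] n ∈ ({2, 3, 4} : Set ℕ))
    (hlt : ∀ i < k, lh^[i] n ∉ ({2, 3, 4} : Set ℕ)) : lhLen n = k := by
  refine le_antisymm (Nat.sInf_le ⟨hk, hmem⟩) (le_csInf ⟨k, hk, hmem⟩ ?_)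
  rintro i ⟨-, hi⟩
  by_contra! hik
  exact hlt i hik hi

section MulTwoPowAdd

variable {t k r : ℕ}

lemma mul_two_pow_add_div_two_pow (hr : r < 2 ^ k) : (t * 2 ^ k + r) / 2 ^ k = t := by
  rw [mul_comm, Nat.mul_add_div (by positivity), Nat.div_eq_of_lt hr, add_zero]

lemma mul_two_pow_mul_two_pow_sub_le_div {i : ℕ} (hi : i ≤ k) :
    t * 2 ^ (k - i) ≤ (t * 2 ^ k + r) / 2 ^ i := by
  rw [Nat.le_div_iff_mul_le (by positivity), mul_assoc, ← pow_add, Nat.sub_add_cancel hi]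
  exact Nat.le_add_right _ _

variable (ht₃ : 3 ≤ t) (ht₄ : t ≤ 4) (hk : 0 < k) (hr : r < 2 ^ k)
include ht₃ ht₄ hk hr

/-- Before step `k` the lower halves are at least `2t ≥ 6`. -/
lemma lhLen_mul_two_pow_add : lhLen (t * 2 ^ k + r) = k := by
  refine lhLen_eq_of_forall_lt hk ?_ fun i hi => ?_
  · rw [iterate_lh, mul_two_pow_add_div_two_pow hr]
    simp only [Set.mem_insert_iff, Set.mem_singleton_iff]
    omega
  · have hle := mul_two_pow_mul_two_pow_sub_le_div (t := t) (r := r) hi.le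
    have htwo : 2 ≤ 2 ^ (k - i) := Nat.le_self_pow (by omega) 2
    have hsix : 6 ≤ t * 2 ^ (k - i) := by nlinarith
    rw [iterate_lh]
    simp only [Set.mem_insert_iff, Set.mem_singleton_iff]
    omega

lemma lhTail_mul_two_pow_add : lhTail (t * 2 ^ k + r) = t := by
  rw [lhTail, lhLen_mul_two_pow_add ht₃ ht₄ hk hr, iterate_lh, mul_two_pow_add_div_two_pow hr]

end MulTwoPowAdd

/-- The exponents `e (a+1) > ⋯ > e (N-1) > 0` together with `0` are distinct and below `e a`. -/
lemma sum_Ico_two_pow_add_one_lt {N a : ℕ} {e : ℕ → ℕ} (hanti : StrictAntiOn e (Set.Iio N))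
    (hpos : ∀ i < N, 0 < e i) (ha : a < N) :
    (∑ i ∈ Finset.Ico (a + 1) N, 2 ^ e i) + 1 < 2 ^ e a := by
  have hinj : Set.InjOn e (Finset.Ico (a + 1) N) :=
    hanti.injOn.mono fun i hi => (Finset.mem_Ico.mp hi).2
  have hzero : 0 ∉ (Finset.Ico (a + 1) N).image e := by
    intro h0
    obtain ⟨i, hi, hi0⟩ := Finset.mem_image.mp h0
    exact (hpos i (Finset.mem_Ico.mp hi).2).ne' hi0
  have hsum : (∑ i ∈ Finset.Ico (a + 1) N, 2 ^ e i) + 1 =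
      ∑ k ∈ insert 0 ((Finset.Ico (a + 1) N).image e), 2 ^ k := by
    rw [Finset.sum_insert hzero, Finset.sum_image hinj, pow_zero, add_comm]
  rw [hsum]
  refine Nat.geomSum_lt le_rfl fun k hk => ?_
  simp only [Finset.mem_insert, Finset.mem_image, Finset.mem_Ico] at hk
  rcases hk with rfl | ⟨i, ⟨hai, hiN⟩, rfl⟩
  · exact hpos a ha
  · exact hanti (Set.mem_Iio.mpr ha) (Set.mem_Iio.mpr hiN) (by omega)

theorem lhLen_lhTail_of_gap_one (n N : ℕ) (e : ℕ → ℕ) (hN : 2 ≤ N)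
    (hanti : ∀ i j : ℕ, i < j → j < N → e j < e i)
    (hpos : ∀ i : ℕ, i < N → 0 < e i)
    (hn : n = (∑ i ∈ Finset.range N, 2 ^ e i) + 1)
    (hgap : e 0 = e 1 + 1) :
    lhLen n = e 0 - 1 ∧ lhTail n = 3 := by
  have hrest := sum_Ico_two_pow_add_one_lt (a := 1)
    (fun i _ j hj hij => hanti i j hij hj) hpos (by omega)
  have hsplit : n = 3 * 2 ^ e 1 + ((∑ i ∈ Finset.Ico 2 N, 2 ^ e i) + 1) := by
    rw [hn, Finset.range_eq_Ico, Finset.sum_eq_sum_Ico_succ_bot (by omega),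
      Finset.sum_eq_sum_Ico_succ_bot (by omega), hgap, pow_succ]
    ring
  have he₁ : 0 < e 1 := hpos 1 (by omega)
  rw [hsplit, lhLen_mul_two_pow_add le_rfl (by norm_num) he₁ hrest,
    lhTail_mul_two_pow_add le_rfl (by norm_num) he₁ hrest]
  omega
end

section
/- Let n > 7 be an odd integer with binary expansion n = 2^{e_1} + 2^{e_2} + ⋯ + 2^{e_N} + 1, where N ≥ 1 and e_1 > e_2 > ⋯ > e_N > 0. If either N = 1 (i.e., n = 2^{e_1} + 1) or e_1 − e_2 > 2, then the length of the sequence of lower halves of n is l(n) = e_1 − 2 and its tail is t(n) = 4. -/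
/-!
Write `n = 2 ^ (k + 2) + r` with `k = e 0 - 2` and `r = 2 ^ e 1 + ⋯ + 2 ^ e (N - 1) + 1`.
The remaining exponents are distinct, positive and at most `e 1`, so `r - 1` is even and below
`2 ^ (e 1 + 1)`; the gap condition (or `N = 1` together with `n > 7`) then gives `k ≥ 1` and
`r < 2 ^ k`. Hence `n / 2 ^ i ≥ 2 ^ (k + 2 - i) ≥ 8` for `i < k`, while `n / 2 ^ k = 4`.
-/

open Finset

lemma lh_iterate (i n : ℕ) : lh^[i] n = n / 2 ^ i := by
  induction i generalizing n with
  | zero => simp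
  | succ i ih => rw [Function.iterate_succ_apply', ih, lh, Nat.div_div_eq_div_mul, pow_succ]

lemma lhLen_eq_of_forall_lt_notMem {n k : ℕ} (hk : 0 < k)
    (hmem : lh^[k] n ∈ ({2, 3, 4} : Set ℕ))
    (hmin : ∀ i, 0 < i → i < k → lh^[i] n ∉ ({2, 3, 4} : Set ℕ)) :
    lhLen n = k :=
  le_antisymm (Nat.sInf_le ⟨hk, hmem⟩) <|
    le_csInf ⟨k, hk, hmem⟩ fun i ⟨hi, hmem_i⟩ => not_lt.1 fun hik => hmin i hi hik hmem_i

section TwoPowAdd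

variable {k r : ℕ}

lemma two_pow_add_div_two_pow_eq_four (hr : r < 2 ^ k) : (2 ^ (k + 2) + r) / 2 ^ k = 4 :=
  Nat.div_eq_of_lt_le (by rw [pow_add]; lia) (by rw [pow_add]; lia)

lemma eight_le_two_pow_add_div_two_pow {i : ℕ} (hi : i < k) : 8 ≤ (2 ^ (k + 2) + r) / 2 ^ i := by
  rw [Nat.le_div_iff_mul_le (Nat.two_pow_pos i)]
  calc 8 * 2 ^ i = 2 ^ (i + 3) := by rw [pow_add]; lia
    _ ≤ 2 ^ (k + 2) := Nat.pow_le_pow_right two_pos (by lia)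
    _ ≤ 2 ^ (k + 2) + r := Nat.le_add_right _ _

lemma lhLen_two_pow_add (hk : 0 < k) (hr : r < 2 ^ k) : lhLen (2 ^ (k + 2) + r) = k := by
  refine lhLen_eq_of_forall_lt_notMem hk ?_ fun i _ hik => ?_
  · simp [lh_iterate, two_pow_add_div_two_pow_eq_four hr]
  · have := eight_le_two_pow_add_div_two_pow (r := r) hik
    simp only [lh_iterate, Set.mem_insert_iff, Set.mem_singleton_iff]
    lia

lemma lhTail_two_pow_add (hk : 0 < k) (hr : r < 2 ^ k) : lhTail (2 ^ (k + 2) + r) = 4 := by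
  rw [lhTail, lhLen_two_pow_add hk hr, lh_iterate, two_pow_add_div_two_pow_eq_four hr]

end TwoPowAdd

section StrictlyDecreasingExponents

variable {M : ℕ} {f : ℕ → ℕ}

lemma sum_two_pow_lt_of_strictAnti (hf : ∀ i j, i < j → j < M → f j < f i) :
    ∑ i ∈ range M, 2 ^ f i < 2 ^ (f 0 + 1) := by
  have hinj : Set.InjOn f (range M) := fun i hi j hj hij => by
    simp only [coe_range, Set.mem_Iio] at hi hj
    rcases lt_trichotomy i j with h | h | h
    · exact absurd hij (hf i j h hj).ne'
    · exact h
    · exact absurd hij (hf j i h hi).ne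
  rw [← sum_image hinj]
  refine Nat.geomSum_lt le_rfl fun _ hx => ?_
  obtain ⟨i, hi, rfl⟩ := mem_image.1 hx
  rcases Nat.eq_zero_or_pos i with rfl | hi0
  · lia
  · exact (hf 0 i hi0 (mem_range.1 hi)).trans (Nat.lt_succ_self _)

lemma sum_two_pow_add_one_lt_of_strictAnti (hf : ∀ i j, i < j → j < M → f j < f i)
    (hpos : ∀ i < M, 0 < f i) : ∑ i ∈ range M, 2 ^ f i + 1 < 2 ^ (f 0 + 1) := by
  have hlt := sum_two_pow_lt_of_strictAnti hf
  have heven : 2 ∣ ∑ i ∈ range M, 2 ^ f i :=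
    dvd_sum fun i hi => dvd_pow_self 2 (hpos i (mem_range.1 hi)).ne'
  have : 2 ∣ 2 ^ (f 0 + 1) := dvd_pow_self 2 (Nat.succ_ne_zero _)
  lia

end StrictlyDecreasingExponents

theorem lhLen_lhTail_of_gap_large (n N : ℕ) (e : ℕ → ℕ) (hn7 : 7 < n) (hN : 1 ≤ N)
    (hanti : ∀ i j : ℕ, i < j → j < N → e j < e i)
    (hpos : ∀ i : ℕ, i < N → 0 < e i)
    (hn : n = (∑ i ∈ Finset.range N, 2 ^ e i) + 1)
    (hgap : N = 1 ∨ e 1 + 2 < e 0) :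
    lhLen n = e 0 - 2 ∧ lhTail n = 4 := by
  obtain ⟨M, rfl⟩ : ∃ M, N = M + 1 := ⟨N - 1, by lia⟩
  rw [sum_range_succ'] at hn
  set r := ∑ i ∈ range M, 2 ^ e (i + 1) + 1 with hr_def
  have hr : 0 < e 0 - 2 ∧ r < 2 ^ (e 0 - 2) := by
    rcases hgap with hM | hgap
    · obtain rfl : M = 0 := by lia
      have h3 : 3 ≤ e 0 := by
        by_contra! h
        have : 2 ^ e 0 ≤ 2 ^ 2 := Nat.pow_le_pow_right two_pos (by lia)
        simp only [range_zero, sum_empty] at hn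
        lia
      exact ⟨by lia, by simpa [r] using Nat.one_lt_two_pow (by lia)⟩
    · have hsum := sum_two_pow_add_one_lt_of_strictAnti (M := M) (f := fun i => e (i + 1))
        (fun i j hij hj => hanti _ _ (by lia) (by lia)) (fun i hi => hpos _ (by lia))
      exact ⟨by lia, hsum.trans_le (Nat.pow_le_pow_right two_pos (by lia))⟩
  have hn' : n = 2 ^ (e 0 - 2 + 2) + r := by rw [Nat.sub_add_cancel (by lia), hr_def]; lia
  rw [hn']
  exact ⟨lhLen_two_pow_add hr.1 hr.2, lhTail_two_pow_add hr.1 hr.2⟩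
end
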